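/- arXiv:2401.16198 — 2 statements merged into one kernel-verified Lean document; each statement's English description precedes it below -/
import Mathlib

section
/- Consider the principal-agent instance with n = 4 actions, m = 4 outcomes, costs c = (0, 0.2, 0.4, 0.5), rewards r = (0, 1.0, 1.6, 2.0), and forecast matrix F with rows (1.00, 0.00, 0.00, 0.00), (0.45, 0.20, 0.25, 0.10), (0.35, 0.05, 0.25, 0.35), (0.15, 0.30, 0.30, 0.25). For this instance, every valid free-fall dynamic contract π′ satisfies Util(π′) ≤ 0.753, while there exists a valid dynamic contract π with Util(π) ≥ 0.764. In particular, for general (non-scaled) contracts, free-fall dynamic contracts are not optimal among dynamic contracts. -/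
open Finset

/-- Agent's utility `u_A(p, i) = Σ_j F_{ij} p_j − c_i` from action `i` under
contract `p`. -/
noncomputable def uA (m : ℕ) (c : ℕ → ℝ) (F : ℕ → ℕ → ℝ) (p : ℕ → ℝ) (i : ℕ) : ℝ :=
  (∑ j ∈ Finset.Icc 1 m, F i j * p j) - c i

/-- Principal's utility `u_P(p, i) = Σ_j F_{ij} (r_j − p_j)`. -/
noncomputable def uP (m : ℕ) (F : ℕ → ℕ → ℝ) (r : ℕ → ℝ) (p : ℕ → ℝ) (i : ℕ) : ℝ :=
  ∑ j ∈ Finset.Icc 1 m, F i j * (r j - p j)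

/-- Best-response set of the agent to contract `p`. -/
def BRg (n m : ℕ) (c : ℕ → ℝ) (F : ℕ → ℕ → ℝ) (p : ℕ → ℝ) : Set ℕ :=
  {i | i ∈ Finset.Icc 1 n ∧ ∀ j ∈ Finset.Icc 1 n, uA m c F p j ≤ uA m c F p i}

/-- A general dynamic contract with `K` segments (indexed `1,…,K`):
contracts `p k : ℕ → ℝ` (coordinates `1,…,m`), durations `τ`, actions `a`. -/
structure DGC where
  K : ℕ
  p : ℕ → ℕ → ℝ
  τ : ℕ → ℝ
  a : ℕ → ℕ

namespace DGC

/-- Total duration of the first `k` segments. -/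
noncomputable def Tsum (π : DGC) (k : ℕ) : ℝ := ∑ j ∈ Finset.Icc 1 k, π.τ j

/-- Historical average contract `ρ^k` after the first `k` segments, with the
convention `ρ^0 := p^1`. -/
noncomputable def rho (π : DGC) (k : ℕ) (j : ℕ) : ℝ :=
  if k = 0 then π.p 1 j
  else (∑ k' ∈ Finset.Icc 1 k, π.τ k' * π.p k' j) / π.Tsum k

/-- Validity of a general dynamic contract. -/
def Valid (n m : ℕ) (c : ℕ → ℝ) (F : ℕ → ℕ → ℝ) (π : DGC) : Prop :=
  1 ≤ π.K ∧
    (∀ k ∈ Finset.Icc 1 π.K,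
      (∀ j ∈ Finset.Icc 1 m, 0 ≤ π.p k j) ∧ 0 < π.τ k ∧ π.a k ∈ Finset.Icc 1 n) ∧
    (∀ k ∈ Finset.Icc 1 π.K, π.a k ∈ BRg n m c F (π.rho k)) ∧
    (∀ k, 2 ≤ k → k ≤ π.K → π.a k ∈ BRg n m c F (π.rho (k - 1)))

/-- Time-averaged principal utility. -/
noncomputable def Util (m : ℕ) (F : ℕ → ℕ → ℝ) (r : ℕ → ℝ) (π : DGC) : ℝ :=
  (∑ k ∈ Finset.Icc 1 π.K, π.τ k * uP m F r (π.p k) (π.a k)) / π.Tsum π.K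

/-- Segment `k` is degenerate if `BR(ρ^{k-1}) ∩ BR(ρ^k)` has at least two
elements (with `ρ^0 := p^1`). -/
def Degenerate (n m : ℕ) (c : ℕ → ℝ) (F : ℕ → ℕ → ℝ) (π : DGC) (k : ℕ) : Prop :=
  ∃ i j, i ≠ j ∧
    i ∈ BRg n m c F (π.rho (k - 1)) ∩ BRg n m c F (π.rho k) ∧
    j ∈ BRg n m c F (π.rho (k - 1)) ∩ BRg n m c F (π.rho k)

open scoped Classical in
/-- Time-averaged principal utility counting only non-degenerate segments. -/
noncomputable def Util0 (n m : ℕ) (c : ℕ → ℝ) (F : ℕ → ℕ → ℝ) (r : ℕ → ℝ)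
    (π : DGC) : ℝ :=
  (∑ k ∈ Finset.Icc 1 π.K,
    if Degenerate n m c F π k then 0 else π.τ k * uP m F r (π.p k) (π.a k)) /
    π.Tsum π.K

/-- Free-fall: the zero contract is offered on every segment after the first. -/
def FreeFall (π : DGC) : Prop := ∀ k, 2 ≤ k → k ≤ π.K → ∀ j, π.p k j = 0

end DGC

/-- Costs of the counterexample instance: `c = (0, 0.2, 0.4, 0.5)`. -/
noncomputable def cEx : ℕ → ℝ := fun i =>
  if i = 2 then 0.2 else if i = 3 then 0.4 else if i = 4 then 0.5 else 0

/-- Rewards of the counterexample instance: `r = (0, 1.0, 1.6, 2.0)`. -/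
noncomputable def rEx : ℕ → ℝ := fun j =>
  if j = 2 then 1.0 else if j = 3 then 1.6 else if j = 4 then 2.0 else 0

/-- Forecast matrix of the counterexample instance. -/
noncomputable def FEx : ℕ → ℕ → ℝ := fun i j =>
  match i, j with
  | 1, 1 => 1.00
  | 2, 1 => 0.45 | 2, 2 => 0.20 | 2, 3 => 0.25 | 2, 4 => 0.10
  | 3, 1 => 0.35 | 3, 2 => 0.05 | 3, 3 => 0.25 | 3, 4 => 0.35
  | 4, 1 => 0.15 | 4, 2 => 0.30 | 4, 3 => 0.30 | 4, 4 => 0.25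
  | _, _ => 0

/-! In a free-fall contract all payments `v = τ¹p¹` are made in the first segment, so
`ρᵏ = v / Tₖ` with `Tₖ = τ¹ + ⋯ + τᵏ`, and the agent's best responses at `ρᵏ` are the maximisers
of the cumulative utility `F_i·v − Tₖ c_i`. Since `aᵏ⁺¹` is a best response at both `Tₖ` and
`Tₖ₊₁`, these maxima telescope: the total cost `Σ τᵏ c_{aᵏ}` equals `F_{a¹}·v − G`, where `G` is
the maximal cumulative utility at the end. Bounding every expected reward by `1.3 c_i + 0.63`
therefore leaves `T · Util ≤ 0.3 F_{a¹}·v − 1.3 G + 0.63 T`, and `0.3 F_a·v ≤ 0.123 T + 1.3 G`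
is a linear inequality in `(v, T)` with a duality certificate for each action `a`. -/

lemma sum_Icc_one_four {M : Type*} [AddCommMonoid M] (f : ℕ → M) :
    ∑ j ∈ Icc 1 4, f j = f 1 + f 2 + f 3 + f 4 := by
  rw [show Icc 1 4 = {1, 2, 3, 4} by decide]
  simp [add_assoc]

noncomputable def expectedPay (m : ℕ) (F : ℕ → ℕ → ℝ) (p : ℕ → ℝ) (i : ℕ) : ℝ :=
  ∑ j ∈ Icc 1 m, F i j * p j

noncomputable def cumulativeUA (m : ℕ) (c : ℕ → ℝ) (F : ℕ → ℕ → ℝ) (v : ℕ → ℝ) (T : ℝ)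
    (i : ℕ) : ℝ :=
  expectedPay m F v i - T * c i

section Utilities

variable {n m : ℕ} {c : ℕ → ℝ} {F : ℕ → ℕ → ℝ}

lemma uP_eq_sub (r p : ℕ → ℝ) (i : ℕ) :
    uP m F r p i = expectedPay m F r i - expectedPay m F p i := by
  simp only [uP, expectedPay, mul_sub, sum_sub_distrib]

lemma expectedPay_const_mul (t : ℝ) (p : ℕ → ℝ) (i : ℕ) :
    expectedPay m F (fun j => t * p j) i = t * expectedPay m F p i := by
  simp only [expectedPay, mul_sum, mul_left_comm]

lemma uA_div (v : ℕ → ℝ) {T : ℝ} (hT : T ≠ 0) (i : ℕ) :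
    uA m c F (fun j => v j / T) i = cumulativeUA m c F v T i / T := by
  simp only [uA, cumulativeUA, expectedPay, mul_div_assoc', ← sum_div]
  field_simp

lemma mem_BRg_div_iff (v : ℕ → ℝ) {T : ℝ} (hT : 0 < T) {a : ℕ} :
    a ∈ BRg n m c F (fun j => v j / T) ↔
      a ∈ Icc 1 n ∧ ∀ i ∈ Icc 1 n, cumulativeUA m c F v T i ≤ cumulativeUA m c F v T a := by
  simp only [BRg, Set.mem_ofPred_eq, uA_div v hT.ne', div_le_div_iff_of_pos_right hT]

end Utilities

namespace DGC

variable {n m : ℕ} {c : ℕ → ℝ} {F : ℕ → ℕ → ℝ} {r : ℕ → ℝ} {π : DGC}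

noncomputable def cumPay (π : DGC) (k j : ℕ) : ℝ := ∑ k' ∈ Icc 1 k, π.τ k' * π.p k' j

lemma rho_of_ne_zero {k : ℕ} (hk : k ≠ 0) : π.rho k = fun j => π.cumPay k j / π.Tsum k := by
  funext j
  simp [rho, cumPay, hk]

lemma cumPay_one : π.cumPay 1 = fun j => π.τ 1 * π.p 1 j := by
  funext j
  simp [cumPay]

lemma Tsum_succ (k : ℕ) : π.Tsum (k + 1) = π.Tsum k + π.τ (k + 1) :=
  sum_Icc_succ_top (by omega) _

lemma Valid.action_mem (h : π.Valid n m c F) {k : ℕ} (hk1 : 1 ≤ k) (hkK : k ≤ π.K) :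
    π.a k ∈ Icc 1 n :=
  (h.2.1 k (mem_Icc.2 ⟨hk1, hkK⟩)).2.2

lemma Valid.Tsum_pos (h : π.Valid n m c F) {k : ℕ} (hk1 : 1 ≤ k) (hkK : k ≤ π.K) :
    0 < π.Tsum k :=
  sum_pos (fun i hi => (h.2.1 i (by simp only [mem_Icc] at hi ⊢; omega)).2.1)
    ⟨1, by simp [hk1]⟩

lemma FreeFall.cumPay_eq (hff : π.FreeFall) {k : ℕ} (hk1 : 1 ≤ k) (hkK : k ≤ π.K) :
    π.cumPay k = π.cumPay 1 := by
  funext j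
  rw [cumPay_one, cumPay, sum_eq_single_of_mem 1 (by simp [hk1])]
  intro k' hk' hk'1
  simp only [mem_Icc] at hk'
  rw [hff k' (by omega) (by omega), mul_zero]

lemma FreeFall.mem_BRg_rho_iff (hff : π.FreeFall) (hval : π.Valid n m c F) {k : ℕ}
    (hk1 : 1 ≤ k) (hkK : k ≤ π.K) {a : ℕ} :
    a ∈ BRg n m c F (π.rho k) ↔ a ∈ Icc 1 n ∧ ∀ i ∈ Icc 1 n,
      cumulativeUA m c F (π.cumPay 1) (π.Tsum k) i ≤
        cumulativeUA m c F (π.cumPay 1) (π.Tsum k) a := by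
  rw [rho_of_ne_zero (by omega), hff.cumPay_eq hk1 hkK,
    mem_BRg_div_iff _ (hval.Tsum_pos hk1 hkK)]

lemma FreeFall.cumulativeUA_action_succ (hff : π.FreeFall) (hval : π.Valid n m c F) {k : ℕ}
    (hk1 : 1 ≤ k) (hkK : k + 1 ≤ π.K) :
    cumulativeUA m c F (π.cumPay 1) (π.Tsum k) (π.a (k + 1)) =
      cumulativeUA m c F (π.cumPay 1) (π.Tsum k) (π.a k) := by
  have hcur := (hff.mem_BRg_rho_iff hval hk1 (by omega)).1 (hval.2.2.1 k (by simp; omega))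
  have hnext := (hff.mem_BRg_rho_iff hval hk1 (by omega)).1
    (by simpa using hval.2.2.2 (k + 1) (by omega) hkK)
  exact le_antisymm (hcur.2 _ hnext.1) (hnext.2 _ hcur.1)

lemma FreeFall.sum_tau_mul_cost (hff : π.FreeFall) (hval : π.Valid n m c F) {k : ℕ}
    (hk1 : 1 ≤ k) (hkK : k ≤ π.K) :
    ∑ k' ∈ Icc 1 k, π.τ k' * c (π.a k') =
      expectedPay m F (π.cumPay 1) (π.a 1) -
        cumulativeUA m c F (π.cumPay 1) (π.Tsum k) (π.a k) := by
  induction k, hk1 using Nat.le_induction with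
  | base => simp [cumulativeUA, Tsum]
  | succ k hk ih =>
    have hstep := hff.cumulativeUA_action_succ hval hk hkK
    rw [sum_Icc_succ_top (by omega), ih (by omega), Tsum_succ]
    simp only [cumulativeUA] at hstep ⊢
    linarith

lemma FreeFall.sum_tau_mul_uP (hff : π.FreeFall) (hval : π.Valid n m c F) :
    ∑ k ∈ Icc 1 π.K, π.τ k * uP m F r (π.p k) (π.a k) =
      ∑ k ∈ Icc 1 π.K, π.τ k * expectedPay m F r (π.a k) -
        expectedPay m F (π.cumPay 1) (π.a 1) := by
  simp only [uP_eq_sub, mul_sub, sum_sub_distrib, cumPay_one, expectedPay_const_mul]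
  congr 1
  refine sum_eq_single_of_mem 1 (by simp [hval.1]) fun k hk hk1 => ?_
  simp only [mem_Icc] at hk
  simp [expectedPay, hff k (by omega) hk.2]

theorem FreeFall.util_le (hff : π.FreeFall) (hval : π.Valid n m c F) {α β γ : ℝ}
    (hreward : ∀ i ∈ Icc 1 n, expectedPay m F r i ≤ α * c i + β)
    (hpay : ∀ v : ℕ → ℝ, (∀ j ∈ Icc 1 m, 0 ≤ v j) → ∀ T, 0 < T → ∀ G,
      (∀ i ∈ Icc 1 n, cumulativeUA m c F v T i ≤ G) →
        ∀ a ∈ Icc 1 n, (α - 1) * expectedPay m F v a ≤ γ * T + α * G) :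
    π.Util m F r ≤ β + γ := by
  have hK := hval.1
  have hT := hval.Tsum_pos hK le_rfl
  have hreward_sum : ∑ k ∈ Icc 1 π.K, π.τ k * expectedPay m F r (π.a k) ≤
      α * ∑ k ∈ Icc 1 π.K, π.τ k * c (π.a k) + β * π.Tsum π.K := by
    rw [Tsum, mul_sum, mul_sum, ← sum_add_distrib]
    refine sum_le_sum fun k hk => ?_
    have hτ := (hval.2.1 k hk).2.1
    have := mul_le_mul_of_nonneg_left (hreward _ (hval.2.1 k hk).2.2) hτ.le
    linarith
  have hv : ∀ j ∈ Icc 1 m, 0 ≤ π.cumPay 1 j := fun j hj => by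
    have h1 := hval.2.1 1 (by simp [hK])
    rw [cumPay_one]
    exact mul_nonneg h1.2.1.le (h1.1 j hj)
  have hlast := hff.mem_BRg_rho_iff hval hK le_rfl |>.1 (hval.2.2.1 _ (by simp [hK]))
  have hfirst := hpay _ hv _ hT _ hlast.2 _ (hval.action_mem le_rfl hK)
  rw [Util, hff.sum_tau_mul_uP hval, div_le_iff₀ hT]
  rw [hff.sum_tau_mul_cost hval hK le_rfl] at hreward_sum
  linarith

end DGC

lemma expectedPay_rEx_le {i : ℕ} (hi : i ∈ Icc 1 4) :
    expectedPay 4 FEx rEx i ≤ 1.3 * cEx i + 0.63 := by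
  obtain ⟨hi1, hi4⟩ := mem_Icc.1 hi
  rw [expectedPay, sum_Icc_one_four]
  interval_cases i <;> norm_num [FEx, rEx, cEx]

lemma mul_expectedPay_FEx_le (v : ℕ → ℝ) (hv : ∀ j ∈ Icc 1 4, 0 ≤ v j) (T G : ℝ)
    (hG : ∀ i ∈ Icc 1 4, cumulativeUA 4 cEx FEx v T i ≤ G) {a : ℕ} (ha : a ∈ Icc 1 4) :
    (1.3 - 1) * expectedPay 4 FEx v a ≤ 0.123 * T + 1.3 * G := by
  have hv1 := hv 1 (by simp); have hv2 := hv 2 (by simp)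
  have hv3 := hv 3 (by simp); have hv4 := hv 4 (by simp)
  have hG1 := hG 1 (by simp); have hG2 := hG 2 (by simp)
  have hG3 := hG 3 (by simp); have hG4 := hG 4 (by simp)
  simp only [cumulativeUA, expectedPay, sum_Icc_one_four] at hG1 hG2 hG3 hG4 ⊢
  norm_num [FEx, cEx] at hG1 hG2 hG3 hG4
  obtain ⟨ha1, ha4⟩ := mem_Icc.1 ha
  interval_cases a <;> norm_num [FEx] <;> linarith

lemma DGC.FreeFall.util_ex_le {π : DGC} (hff : π.FreeFall) (hval : π.Valid 4 4 cEx FEx) :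
    π.Util 4 FEx rEx ≤ 0.753 :=
  (hff.util_le hval (fun _ => expectedPay_rEx_le)
    fun v hv T _ G hG _ => mul_expectedPay_FEx_le v hv T G hG).trans_eq (by norm_num)

noncomputable def witnessPay : ℕ → ℕ → ℝ
  | 1, 2 => 18 / 19 | 1, 4 => 26 / 19
  | 2, 3 => 4 / 175 | 2, 4 => 4 / 5
  | _, _ => 0

/-- Paying `p¹` for 19 time units makes actions 3 and 4 tie at `ρ¹`; the agent then stays with
the cheaper action 3 under `p²`, a contract that on its own would not even induce it. -/
noncomputable def witness : DGC where
  K := 2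
  p := witnessPay
  τ k := if k = 1 then 19 else 21
  a k := if k = 1 then 4 else 3

lemma witness_rho_one : witness.rho 1 = witnessPay 1 := by
  funext j
  simp [DGC.rho, DGC.Tsum, witness]

lemma witness_rho_two :
    witness.rho 2 = fun j => (19 * witnessPay 1 j + 21 * witnessPay 2 j) / 40 := by
  funext j
  norm_num [DGC.rho, DGC.Tsum, witness, sum_Icc_succ_top]

lemma witness_best_responses :
    4 ∈ BRg 4 4 cEx FEx (witness.rho 1) ∧ 3 ∈ BRg 4 4 cEx FEx (witness.rho 1) ∧
      3 ∈ BRg 4 4 cEx FEx (witness.rho 2) := by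
  refine ⟨⟨by simp, fun j hj => ?_⟩, ⟨by simp, fun j hj => ?_⟩, ⟨by simp, fun j hj => ?_⟩⟩ <;>
  · obtain ⟨hj1, hj4⟩ := mem_Icc.1 hj
    simp only [uA, sum_Icc_one_four, witness_rho_one, witness_rho_two]
    interval_cases j <;> norm_num [witnessPay, FEx, cEx]

lemma witness_valid : witness.Valid 4 4 cEx FEx := by
  obtain ⟨h41, h31, h32⟩ := witness_best_responses
  refine ⟨by simp [witness], fun k hk => ?_, fun k hk => ?_, fun k hk2 hkK => ?_⟩
  · obtain ⟨hk1, hk2 : k ≤ 2⟩ := mem_Icc.1 hk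
    refine ⟨fun j hj => ?_, ?_, ?_⟩
    · obtain ⟨hj1, hj4⟩ := mem_Icc.1 hj
      interval_cases k <;> interval_cases j <;> norm_num [witness, witnessPay]
    all_goals interval_cases k <;> simp [witness]
  · obtain ⟨hk1, hk2 : k ≤ 2⟩ := mem_Icc.1 hk
    interval_cases k
    · exact h41
    · exact h32
  · obtain rfl : k = 2 := by change k ≤ 2 at hkK; omega
    exact h31

lemma witness_util : 0.764 ≤ witness.Util 4 FEx rEx := by
  norm_num [DGC.Util, DGC.Tsum, uP, sum_Icc_one_four, witness, sum_Icc_succ_top, witnessPay,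
    FEx, rEx]

/-- In the given 4-action/4-outcome instance, every valid
free-fall dynamic contract has utility at most `0.753`, while some valid
dynamic contract achieves utility at least `0.764`; hence free-fall contracts
are not optimal among general dynamic contracts. -/
theorem free_fall_not_optimal_general :
    (∀ π' : DGC, π'.Valid 4 4 cEx FEx → π'.FreeFall →
      π'.Util 4 FEx rEx ≤ 0.753) ∧
    (∃ π : DGC, π.Valid 4 4 cEx FEx ∧ 0.764 ≤ π.Util 4 FEx rEx) :=
  ⟨fun _ hval hff => hff.util_ex_le hval, witness, witness_valid, witness_util⟩
end

section
/- For every valid free-fall dynamic linear contract π there exists a valid free-fall dynamic linear contract π′ = ((α′^1, τ′^1, a′^1), …, (α′^{K′}, τ′^{K′}, a′^{K′})) with Util(π′) ≥ Util(π) that both starts and ends at indifference points: α′^1 = α_{i−1,i} and a′^1 = i for some 1 ≤ i ≤ n, and the final time-averaged contract satisfies ᾱ′^{K′} = α_{j−1,j} for some 1 ≤ j ≤ i, where α_{0,1} := 0. (Hence an optimal free-fall linear contract is determined by a pair of indifference points.) -/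
open Finset

/-- Indifference point `α_{i,i+1}` between actions `i` and `i+1`. -/
noncomputable def indiff (c R : ℕ → ℝ) (i : ℕ) : ℝ :=
  (c (i + 1) - c i) / (R (i + 1) - R i)

/-- Breakpoint `α_{i,i+1}` with the convention `α_{0,1} := 0`. -/
noncomputable def bp (c R : ℕ → ℝ) (i : ℕ) : ℝ :=
  if i = 0 then 0 else indiff c R i

/-- A linear contract instance with `n ≥ 2` actions indexed `1,…,n`:
costs `0 = c_1 < … < c_n`, rewards `0 ≤ R_1 < … < R_n`, and indifference
points satisfying `0 < α_{1,2} < … < α_{n-1,n} ≤ 1`. -/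
def LinInstance (n : ℕ) (c R : ℕ → ℝ) : Prop :=
  2 ≤ n ∧ c 1 = 0 ∧ 0 ≤ R 1 ∧
    (∀ i, 1 ≤ i → i < n → c i < c (i + 1)) ∧
    (∀ i, 1 ≤ i → i < n → R i < R (i + 1)) ∧
    0 < indiff c R 1 ∧
    (∀ i, 1 ≤ i → i + 1 ≤ n - 1 → indiff c R i < indiff c R (i + 1)) ∧
    indiff c R (n - 1) ≤ 1

/-- Best-response set of the agent to the linear contract with scalar `x`. -/
def BR (n : ℕ) (c R : ℕ → ℝ) (x : ℝ) : Set ℕ :=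
  {i | i ∈ Finset.Icc 1 n ∧ ∀ j ∈ Finset.Icc 1 n, x * R j - c j ≤ x * R i - c i}

/-- A dynamic linear contract with `K` segments (indexed `1,…,K`):
scalars `α`, durations `τ`, and actions `a`. -/
structure DLC where
  K : ℕ
  α : ℕ → ℝ
  τ : ℕ → ℝ
  a : ℕ → ℕ

namespace DLC

/-- Total duration of the first `k` segments. -/
noncomputable def Tsum (π : DLC) (k : ℕ) : ℝ := ∑ j ∈ Finset.Icc 1 k, π.τ j

/-- Cumulative scalar contract of the first `k` segments. -/
noncomputable def Asum (π : DLC) (k : ℕ) : ℝ := ∑ j ∈ Finset.Icc 1 k, π.α j * π.τ j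

/-- Time-averaged contract `ᾱ^k` after the first `k` segments. -/
noncomputable def avg (π : DLC) (k : ℕ) : ℝ := π.Asum k / π.Tsum k

/-- Validity: positive durations, nonnegative scalars, actions in `{1,…,n}`,
and each action is a best response to the historical average contract at the
end of its segment, and (for `k ≥ 2`) also at its beginning. -/
def Valid (n : ℕ) (c R : ℕ → ℝ) (π : DLC) : Prop :=
  1 ≤ π.K ∧
    (∀ k ∈ Finset.Icc 1 π.K, 0 ≤ π.α k ∧ 0 < π.τ k ∧ π.a k ∈ Finset.Icc 1 n) ∧
    (∀ k ∈ Finset.Icc 1 π.K, π.a k ∈ BR n c R (π.avg k)) ∧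
    (∀ k, 2 ≤ k → k ≤ π.K → π.a k ∈ BR n c R (π.avg (k - 1)))

/-- Time-averaged principal utility. -/
noncomputable def Util (R : ℕ → ℝ) (π : DLC) : ℝ :=
  (∑ k ∈ Finset.Icc 1 π.K, π.τ k * (1 - π.α k) * R (π.a k)) / π.Tsum π.K

/-- Time-averaged agent utility. -/
noncomputable def UtilA (c R : ℕ → ℝ) (π : DLC) : ℝ :=
  (∑ k ∈ Finset.Icc 1 π.K, π.τ k * (π.α k * R (π.a k) - c (π.a k))) / π.Tsum π.K

/-- Free-fall: the zero contract is offered on every segment after the first. -/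
def FreeFall (π : DLC) : Prop := ∀ k, 2 ≤ k → k ≤ π.K → π.α k = 0

/-- Cumulative principal utility `u_P^{(t)}(π)` up to time `t`. -/
noncomputable def cumUtil (R : ℕ → ℝ) (π : DLC) (t : ℝ) : ℝ :=
  ∑ k ∈ Finset.Icc 1 π.K,
    (min t (π.Tsum k) - min t (π.Tsum (k - 1))) * (1 - π.α k) * R (π.a k)

/-- Cumulative scalar contract `A^{(t)}` up to time `t`. -/
noncomputable def cumA (π : DLC) (t : ℝ) : ℝ :=
  ∑ k ∈ Finset.Icc 1 π.K, (min t (π.Tsum k) - min t (π.Tsum (k - 1))) * π.α k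

end DLC

/-!
After its first segment, a free-fall contract with cumulative contract `A = α¹τ¹` has average
`A / t` at time `t`, so it may play an action `a ≥ 2` only while `t ≤ A / α_{a-1,a}` (`fallTime`),
and never an action above its first action `i`. Playing at every time the highest action allowed
earns the concave piecewise linear `greedyReward`, so a contract of total length `T` has utility at
most `greedyUtil A i T = (greedyReward T - A R_i) / T`. On the piece of `greedyReward` of slope
`R_a` this ratio is `R_a + D / T`, monotone in `T`, hence bounded by its value at an end of the
piece. The end `A / α_{m-1,m}` is attained by the `staircase` that starts at `α_{i-1,i}` and
free-falls through the indifference points down to `α_{m-1,m}`; on the unbounded piece the bound is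
the limit `R_1`, the utility of the zero contract.
-/

theorem sum_Icc_sub_pred {M : Type*} [AddCommGroup M] (g : ℕ → M) (K : ℕ) :
    ∑ k ∈ Icc 1 K, (g k - g (k - 1)) = g K - g 0 := by
  induction K with
  | zero => simp
  | succ K ih =>
    rw [sum_Icc_succ_top (by omega), ih, Nat.add_sub_cancel]
    abel

theorem exists_index_bracketing (s : ℕ → ℝ) (T : ℝ) {i : ℕ} (hi : 1 ≤ i) :
    ∃ a, 1 ≤ a ∧ a ≤ i ∧ (2 ≤ a → T ≤ s (a - 1)) ∧ (a < i → s a < T) := by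
  classical
  have hex : ∃ a, 1 ≤ a ∧ (i ≤ a ∨ s a < T) := ⟨i, hi, .inl le_rfl⟩
  obtain ⟨ha1, hspec⟩ := Nat.find_spec hex
  refine ⟨Nat.find hex, ha1, Nat.find_min' hex ⟨hi, .inl le_rfl⟩, fun ha2 => ?_,
    fun hai => hspec.resolve_left (by omega)⟩
  have hprev := Nat.find_min hex (show Nat.find hex - 1 < Nat.find hex by omega)
  exact le_of_not_gt fun h => hprev ⟨by omega, .inr h⟩

-- For antitone `s`: slope `R a` on `[s a, s (a - 1)]`, the reward of playing action `a` exactly there.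
def greedyReward (R s : ℕ → ℝ) (i : ℕ) (t : ℝ) : ℝ :=
  R 1 * t + ∑ l ∈ Ico 1 i, (R (l + 1) - R l) * min t (s l)

section GreedyReward

variable {R s : ℕ → ℝ} {i a : ℕ} {t₁ t₂ : ℝ}

theorem greedyReward_zero (hs : ∀ l ∈ Ico 1 i, 0 ≤ s l) : greedyReward R s i 0 = 0 := by
  rw [greedyReward, mul_zero, zero_add]
  exact sum_eq_zero fun l hl => by rw [min_eq_left (hs l hl), mul_zero]

theorem greedyReward_sub (hs : AntitoneOn s (Set.Ico 1 i)) (ha : 1 ≤ a) (hai : a ≤ i)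
    (ht : t₁ ≤ t₂) (hup : 2 ≤ a → t₂ ≤ s (a - 1)) :
    greedyReward R s i t₂ - greedyReward R s i t₁ =
      R a * (t₂ - t₁) + ∑ l ∈ Ico a i, (R (l + 1) - R l) * (min t₂ (s l) - min t₁ (s l)) := by
  have hfull : ∀ l ∈ Ico 1 a, min t₂ (s l) - min t₁ (s l) = t₂ - t₁ := fun l hl => by
    obtain ⟨hl1, hla⟩ := mem_Ico.1 hl
    have : t₂ ≤ s l := (hup (by omega)).trans (hs ⟨hl1, by omega⟩ ⟨by omega, by omega⟩ (by omega))
    rw [min_eq_left this, min_eq_left (ht.trans this)]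
  have hlow : ∑ l ∈ Ico 1 a, (R (l + 1) - R l) * (min t₂ (s l) - min t₁ (s l)) =
      (R a - R 1) * (t₂ - t₁) := by
    rw [sum_congr rfl fun l hl => by rw [hfull l hl], ← sum_mul, sum_Ico_sub _ ha]
  have hsplit : greedyReward R s i t₂ - greedyReward R s i t₁ = R 1 * (t₂ - t₁) +
      ∑ l ∈ Ico 1 i, (R (l + 1) - R l) * (min t₂ (s l) - min t₁ (s l)) := by
    simp only [greedyReward, mul_sub, sum_sub_distrib]
    ring
  rw [hsplit, ← sum_Ico_consecutive _ ha hai, hlow]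
  ring

theorem mul_sub_le_greedyReward_sub (hR : MonotoneOn R (Set.Icc 1 i))
    (hs : AntitoneOn s (Set.Ico 1 i)) (ha : 1 ≤ a) (hai : a ≤ i) (ht : t₁ ≤ t₂)
    (hup : 2 ≤ a → t₂ ≤ s (a - 1)) :
    R a * (t₂ - t₁) ≤ greedyReward R s i t₂ - greedyReward R s i t₁ := by
  rw [greedyReward_sub hs ha hai ht hup, le_add_iff_nonneg_right]
  refine sum_nonneg fun l hl => mul_nonneg ?_ (sub_nonneg.2 (min_le_min_right _ ht))
  obtain ⟨hal, hli⟩ := mem_Ico.1 hl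
  exact sub_nonneg.2 (hR ⟨by omega, by omega⟩ ⟨by omega, by omega⟩ (by omega))

theorem greedyReward_sub_eq (hs : AntitoneOn s (Set.Ico 1 i)) (ha : 1 ≤ a) (hai : a ≤ i)
    (ht : t₁ ≤ t₂) (hup : 2 ≤ a → t₂ ≤ s (a - 1)) (hlo : a < i → s a ≤ t₁) :
    greedyReward R s i t₂ - greedyReward R s i t₁ = R a * (t₂ - t₁) := by
  rw [greedyReward_sub hs ha hai ht hup, add_eq_left]
  refine sum_eq_zero fun l hl => ?_
  obtain ⟨hal, hli⟩ := mem_Ico.1 hl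
  have : s l ≤ t₁ := (hs ⟨by omega, by omega⟩ ⟨by omega, hli⟩ hal).trans (hlo (by omega))
  rw [min_eq_right this, min_eq_right (this.trans ht), sub_self, mul_zero]

theorem greedyReward_sub_mul_eq (hs : AntitoneOn s (Set.Ico 1 i)) (ha : 1 ≤ a) (hai : a ≤ i)
    (hup₁ : 2 ≤ a → t₁ ≤ s (a - 1)) (hlo₁ : a < i → s a ≤ t₁)
    (hup₂ : 2 ≤ a → t₂ ≤ s (a - 1)) (hlo₂ : a < i → s a ≤ t₂) :
    greedyReward R s i t₁ - R a * t₁ = greedyReward R s i t₂ - R a * t₂ := by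
  rcases le_total t₁ t₂ with h | h
  · linarith [greedyReward_sub_eq (R := R) hs ha hai h hup₂ hlo₁]
  · linarith [greedyReward_sub_eq (R := R) hs ha hai h hup₁ hlo₂]

end GreedyReward

noncomputable def fallTime (c R : ℕ → ℝ) (A : ℝ) (l : ℕ) : ℝ :=
  A / indiff c R l

noncomputable def greedyUtil (c R : ℕ → ℝ) (A : ℝ) (i : ℕ) (t : ℝ) : ℝ :=
  (greedyReward R (fallTime c R A) i t - A * R i) / t

-- On a piece of slope `R a`, `greedyUtil` is `R a + D / t`, monotone in `t` with the sign of `D`.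
theorem greedyUtil_le_greedyUtil {c R : ℕ → ℝ} {A t T : ℝ} {i a : ℕ}
    (hs : AntitoneOn (fallTime c R A) (Set.Ico 1 i)) (ha : 1 ≤ a) (hai : a ≤ i) (ht : 0 < t)
    (hT : 0 < T) (hupt : 2 ≤ a → t ≤ fallTime c R A (a - 1)) (hlot : a < i → fallTime c R A a ≤ t)
    (hupT : 2 ≤ a → T ≤ fallTime c R A (a - 1)) (hloT : a < i → fallTime c R A a ≤ T)
    (hD : 0 ≤ (greedyReward R (fallTime c R A) i T - A * R i - R a * T) * (T - t)) :
    greedyUtil c R A i T ≤ greedyUtil c R A i t := by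
  have := greedyReward_sub_mul_eq (R := R) hs ha hai hupt hlot hupT hloT
  rw [greedyUtil, greedyUtil, div_le_div_iff₀ hT ht]
  nlinarith

def StartsAndEndsAtIndiff (n : ℕ) (c R : ℕ → ℝ) (π : DLC) : Prop :=
  ∃ i, 1 ≤ i ∧ i ≤ n ∧ π.α 1 = bp c R (i - 1) ∧ π.a 1 = i ∧
    ∃ j, 1 ≤ j ∧ j ≤ i ∧ π.avg π.K = bp c R (j - 1)

theorem payoff_succ_sub_payoff {c R : ℕ → ℝ} {l : ℕ} (h : R l ≠ R (l + 1)) (x : ℝ) :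
    (x * R (l + 1) - c (l + 1)) - (x * R l - c l) = (R (l + 1) - R l) * (x - indiff c R l) := by
  rw [indiff, mul_sub, mul_div_cancel₀ _ (sub_ne_zero.mpr h.symm)]
  ring

namespace LinInstance

variable {n : ℕ} {c R : ℕ → ℝ} {A : ℝ} {i : ℕ}

theorem R_lt_succ (hI : LinInstance n c R) {l : ℕ} (hl : 1 ≤ l) (hln : l < n) :
    R l < R (l + 1) :=
  hI.2.2.2.2.1 l hl hln

theorem R_strictMonoOn (hI : LinInstance n c R) : StrictMonoOn R (Set.Icc 1 n) :=
  strictMonoOn_of_lt_succ Set.ordConnected_Icc fun l _ hl hl' => by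
    rw [Order.succ_eq_add_one] at hl' ⊢
    exact hI.R_lt_succ hl.1 (by have := hl'.2; omega)

theorem indiff_strictMonoOn (hI : LinInstance n c R) :
    StrictMonoOn (indiff c R) (Set.Icc 1 (n - 1)) :=
  strictMonoOn_of_lt_succ Set.ordConnected_Icc fun l _ hl hl' => by
    rw [Order.succ_eq_add_one] at hl' ⊢
    exact hI.2.2.2.2.2.2.1 l hl.1 hl'.2

theorem R_nonneg (hI : LinInstance n c R) {l : ℕ} (hl : 1 ≤ l) (hln : l ≤ n) : 0 ≤ R l :=
  hI.2.2.1.trans (hI.R_strictMonoOn.monotoneOn ⟨le_rfl, hl.trans hln⟩ ⟨hl, hln⟩ hl)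

theorem indiff_pos (hI : LinInstance n c R) {l : ℕ} (hl : 1 ≤ l) (hln : l < n) :
    0 < indiff c R l :=
  hI.2.2.2.2.2.1.trans_le
    (hI.indiff_strictMonoOn.monotoneOn ⟨le_rfl, by omega⟩ ⟨hl, by omega⟩ hl)

theorem mem_BR (hI : LinInstance n c R) {m : ℕ} {x : ℝ} (hm : 1 ≤ m) (hmn : m ≤ n)
    (hlo : 2 ≤ m → indiff c R (m - 1) ≤ x) (hhi : m < n → x ≤ indiff c R m) :
    m ∈ BR n c R x := by
  set u : ℕ → ℝ := fun l => x * R l - c l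
  have step : ∀ l, 1 ≤ l → l < n →
      u (l + 1) - u l = (R (l + 1) - R l) * (x - indiff c R l) := fun l hl hln =>
    payoff_succ_sub_payoff (hI.R_lt_succ hl hln).ne x
  have hup : MonotoneOn u (Set.Icc 1 m) :=
    monotoneOn_of_le_succ Set.ordConnected_Icc fun l _ ⟨hl1, _⟩ hl' => by
      rw [Order.succ_eq_add_one] at hl' ⊢
      obtain ⟨-, hlm⟩ := hl'
      have hx : indiff c R l ≤ x := (hI.indiff_strictMonoOn.monotoneOn ⟨hl1, by omega⟩
        ⟨by omega, by omega⟩ (by omega)).trans (hlo (by omega))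
      have := step l hl1 (by omega)
      nlinarith [hI.R_lt_succ hl1 (by omega)]
  have hdown : AntitoneOn u (Set.Icc m n) :=
    antitoneOn_of_succ_le Set.ordConnected_Icc fun l _ ⟨hml, _⟩ hl' => by
      rw [Order.succ_eq_add_one] at hl' ⊢
      obtain ⟨-, hln⟩ := hl'
      have hx : x ≤ indiff c R l := (hhi (by omega)).trans
        (hI.indiff_strictMonoOn.monotoneOn ⟨hm, by omega⟩ ⟨by omega, by omega⟩ hml)
      have := step l (by omega) (by omega)
      nlinarith [hI.R_lt_succ (l := l) (by omega) (by omega)]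
  refine ⟨mem_Icc.2 ⟨hm, hmn⟩, fun j hj => ?_⟩
  obtain ⟨hj1, hjn⟩ := mem_Icc.1 hj
  rcases le_total j m with hjm | hmj
  · exact hup ⟨hj1, hjm⟩ ⟨hm, le_rfl⟩ hjm
  · exact hdown ⟨le_rfl, hmn⟩ ⟨hmj, hjn⟩ hmj

theorem mem_BR_indiff (hI : LinInstance n c R) {l : ℕ} (hl : 1 ≤ l) (hln : l < n) :
    l ∈ BR n c R (indiff c R l) ∧ l + 1 ∈ BR n c R (indiff c R l) := by
  refine ⟨hI.mem_BR hl hln.le (fun h2 => ?_) fun _ => le_rfl,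
    hI.mem_BR (by omega) hln (fun _ => le_rfl) fun h => ?_⟩
  · exact hI.indiff_strictMonoOn.monotoneOn ⟨by omega, by omega⟩ ⟨hl, by omega⟩ (by omega)
  · exact (hI.indiff_strictMonoOn ⟨hl, by omega⟩ ⟨by omega, by omega⟩ (by omega)).le

theorem indiff_pred_le_of_mem_BR (hI : LinInstance n c R) {m : ℕ} {x : ℝ} (hm : 2 ≤ m)
    (h : m ∈ BR n c R x) : indiff c R (m - 1) ≤ x := by
  obtain ⟨l, rfl⟩ : ∃ l, m = l + 1 := ⟨m - 1, by omega⟩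
  have hln := (mem_Icc.1 h.1).2
  have hpay := h.2 l (mem_Icc.2 ⟨by omega, by omega⟩)
  rw [Nat.add_sub_cancel]
  have := payoff_succ_sub_payoff (c := c) (hI.R_lt_succ (l := l) (by omega) hln).ne x
  nlinarith [hI.R_lt_succ (l := l) (by omega) hln]

theorem le_of_mem_BR_of_lt (hI : LinInstance n c R) {p q : ℕ} {x y : ℝ} (hxy : x < y)
    (hp : p ∈ BR n c R x) (hq : q ∈ BR n c R y) : p ≤ q := by
  by_contra! hqp
  have hR : R q < R p := hI.R_strictMonoOn (mem_Icc.1 hq.1) (mem_Icc.1 hp.1) hqp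
  have h₁ := hp.2 q hq.1
  have h₂ := hq.2 p hp.1
  nlinarith [mul_pos (sub_pos.2 hxy) (sub_pos.2 hR)]

theorem fallTime_antitoneOn (hI : LinInstance n c R) (hA : 0 ≤ A) (hin : i ≤ n) :
    AntitoneOn (fallTime c R A) (Set.Ico 1 i) := fun k ⟨hk, _⟩ l ⟨_, hli⟩ hkl =>
  div_le_div_of_nonneg_left hA (hI.indiff_pos hk (by omega))
    (hI.indiff_strictMonoOn.monotoneOn ⟨hk, by omega⟩ ⟨by omega, by omega⟩ hkl)

theorem fallTime_nonneg (hI : LinInstance n c R) (hA : 0 ≤ A) (hin : i ≤ n) :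
    ∀ l ∈ Ico 1 i, 0 ≤ fallTime c R A l := fun l hl =>
  have ⟨hl, hli⟩ := mem_Ico.1 hl
  div_nonneg hA (hI.indiff_pos hl (by omega)).le

theorem fallTime_pos (hI : LinInstance n c R) (hA : 0 < A) {l : ℕ} (hl : 1 ≤ l) (hln : l < n) :
    0 < fallTime c R A l :=
  div_pos hA (hI.indiff_pos hl hln)

end LinInstance

namespace DLC

variable {n : ℕ} {c R s : ℕ → ℝ} {i : ℕ} {π : DLC}

@[simp]
theorem Tsum_zero (π : DLC) : π.Tsum 0 = 0 := by
  simp [Tsum]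

theorem Tsum_sub_Tsum_pred (π : DLC) {k : ℕ} (hk : 1 ≤ k) :
    π.Tsum k - π.Tsum (k - 1) = π.τ k := by
  obtain ⟨k, rfl⟩ : ∃ j, k = j + 1 := ⟨k - 1, by omega⟩
  rw [Tsum, Tsum, sum_Icc_succ_top (by omega), Nat.add_sub_cancel, add_sub_cancel_left]

theorem sum_le_greedyReward (hR : MonotoneOn R (Set.Icc 1 i)) (hs : AntitoneOn s (Set.Ico 1 i))
    (hs₀ : ∀ l ∈ Ico 1 i, 0 ≤ s l)
    (hseg : ∀ k ∈ Icc 1 π.K, 0 ≤ π.τ k ∧ 1 ≤ π.a k ∧ π.a k ≤ i ∧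
      (2 ≤ π.a k → π.Tsum k ≤ s (π.a k - 1))) :
    ∑ k ∈ Icc 1 π.K, π.τ k * R (π.a k) ≤ greedyReward R s i (π.Tsum π.K) := by
  calc ∑ k ∈ Icc 1 π.K, π.τ k * R (π.a k)
      ≤ ∑ k ∈ Icc 1 π.K,
          (greedyReward R s i (π.Tsum k) - greedyReward R s i (π.Tsum (k - 1))) := by
        refine sum_le_sum fun k hk => ?_
        obtain ⟨hτ, ha, hai, hup⟩ := hseg k hk
        have hτk := π.Tsum_sub_Tsum_pred (mem_Icc.1 hk).1
        rw [← hτk, mul_comm]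
        exact mul_sub_le_greedyReward_sub hR hs ha hai (by linarith) hup
    _ = greedyReward R s i (π.Tsum π.K) := by
        rw [sum_Icc_sub_pred (fun k => greedyReward R s i (π.Tsum k)), Tsum_zero,
          greedyReward_zero hs₀, sub_zero]

theorem sum_eq_greedyReward (hs : AntitoneOn s (Set.Ico 1 i)) (hs₀ : ∀ l ∈ Ico 1 i, 0 ≤ s l)
    (hseg : ∀ k ∈ Icc 1 π.K, 0 ≤ π.τ k ∧ 1 ≤ π.a k ∧ π.a k ≤ i ∧
      (2 ≤ π.a k → π.Tsum k ≤ s (π.a k - 1)) ∧ (π.a k < i → s (π.a k) ≤ π.Tsum (k - 1))) :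
    ∑ k ∈ Icc 1 π.K, π.τ k * R (π.a k) = greedyReward R s i (π.Tsum π.K) := by
  calc ∑ k ∈ Icc 1 π.K, π.τ k * R (π.a k)
      = ∑ k ∈ Icc 1 π.K,
          (greedyReward R s i (π.Tsum k) - greedyReward R s i (π.Tsum (k - 1))) := by
        refine sum_congr rfl fun k hk => ?_
        obtain ⟨hτ, ha, hai, hup, hlo⟩ := hseg k hk
        have hτk := π.Tsum_sub_Tsum_pred (mem_Icc.1 hk).1
        rw [← hτk, mul_comm]
        exact (greedyReward_sub_eq hs ha hai (by linarith) hup hlo).symm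
    _ = greedyReward R s i (π.Tsum π.K) := by
        rw [sum_Icc_sub_pred (fun k => greedyReward R s i (π.Tsum k)), Tsum_zero,
          greedyReward_zero hs₀, sub_zero]

theorem FreeFall.Asum_eq (hff : π.FreeFall) {k : ℕ} (hk : 1 ≤ k) (hkK : k ≤ π.K) :
    π.Asum k = π.α 1 * π.τ 1 := by
  rw [Asum, sum_eq_single_of_mem 1 (mem_Icc.2 ⟨le_rfl, hk⟩)]
  intro j hj hj1
  obtain ⟨hj₁, hjk⟩ := mem_Icc.1 hj
  rw [hff j (by omega) (by omega), zero_mul]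

theorem FreeFall.avg_eq (hff : π.FreeFall) {k : ℕ} (hk : 1 ≤ k) (hkK : k ≤ π.K) :
    π.avg k = π.α 1 * π.τ 1 / π.Tsum k := by
  rw [avg, hff.Asum_eq hk hkK]

theorem FreeFall.Util_eq (hff : π.FreeFall) (hK : 1 ≤ π.K) :
    π.Util R = (∑ k ∈ Icc 1 π.K, π.τ k * R (π.a k) - π.α 1 * π.τ 1 * R (π.a 1)) / π.Tsum π.K := by
  have hpaid : ∑ k ∈ Icc 1 π.K, π.α k * π.τ k * R (π.a k) = π.α 1 * π.τ 1 * R (π.a 1) := by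
    refine sum_eq_single_of_mem 1 (mem_Icc.2 ⟨le_rfl, hK⟩) fun j hj hj1 => ?_
    obtain ⟨hj₁, hjK⟩ := mem_Icc.1 hj
    rw [hff j (by omega) hjK, zero_mul, zero_mul]
  rw [Util, ← hpaid, ← sum_sub_distrib]
  congr 1
  exact sum_congr rfl fun k _ => by ring

theorem Valid.τ_pos (hπ : π.Valid n c R) {k : ℕ} (hk : k ∈ Icc 1 π.K) : 0 < π.τ k :=
  (hπ.2.1 k hk).2.1

theorem Valid.Tsum_pos (hπ : π.Valid n c R) {k : ℕ} (hk : 1 ≤ k) (hkK : k ≤ π.K) :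
    0 < π.Tsum k :=
  sum_pos (fun _ hj => hπ.τ_pos (Icc_subset_Icc_right hkK hj)) ⟨1, mem_Icc.2 ⟨le_rfl, hk⟩⟩

theorem Valid.Tsum_one_lt (hπ : π.Valid n c R) {k : ℕ} (hk : 2 ≤ k) (hkK : k ≤ π.K) :
    π.Tsum 1 < π.Tsum k :=
  sum_lt_sum_of_subset (Icc_subset_Icc_right (by omega)) (mem_Icc.2 ⟨by omega, le_rfl⟩)
    (by simp; omega) (hπ.τ_pos (mem_Icc.2 ⟨by omega, hkK⟩))
    fun _ hj _ => (hπ.τ_pos (Icc_subset_Icc_right hkK hj)).le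

theorem Valid.indiff_pred_le_avg (hI : LinInstance n c R) (hπ : π.Valid n c R) {k : ℕ}
    (hk : k ∈ Icc 1 π.K) (ha : 2 ≤ π.a k) : indiff c R (π.a k - 1) ≤ π.avg k :=
  hI.indiff_pred_le_of_mem_BR ha (hπ.2.2.1 k hk)

theorem Valid.a_le_a_one (hI : LinInstance n c R) (hπ : π.Valid n c R) (hff : π.FreeFall)
    {k : ℕ} (hk : k ∈ Icc 1 π.K) : π.a k ≤ π.a 1 := by
  have h₁ : 1 ∈ Icc 1 π.K := mem_Icc.2 ⟨le_rfl, hπ.1⟩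
  obtain ⟨hk₁, hkK⟩ := mem_Icc.1 hk
  by_cases hak : π.a k ≤ 1
  · exact hak.trans (mem_Icc.1 (hπ.2.1 1 h₁).2.2).1
  obtain rfl | hk₂ := eq_or_lt_of_le hk₁
  · exact le_rfl
  -- the average is still positive, so it has strictly dropped since the first segment
  have hakn := (mem_Icc.1 (hπ.2.1 k hk).2.2).2
  have havg : 0 < π.avg k :=
    (hI.indiff_pos (by omega) (by omega)).trans_le (hπ.indiff_pred_le_avg hI hk (by omega))
  rw [hff.avg_eq hk₁ hkK] at havg
  have hA := (div_pos_iff_of_pos_right (hπ.Tsum_pos hk₁ hkK)).1 havg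
  have hlt : π.avg k < π.avg 1 := by
    rw [hff.avg_eq hk₁ hkK, hff.avg_eq le_rfl hπ.1]
    exact div_lt_div_of_pos_left hA (hπ.Tsum_pos le_rfl hπ.1) (hπ.Tsum_one_lt hk₂ hkK)
  exact hI.le_of_mem_BR_of_lt hlt (hπ.2.2.1 k hk) (hπ.2.2.1 1 h₁)

theorem Valid.Tsum_le_fallTime (hI : LinInstance n c R) (hπ : π.Valid n c R) (hff : π.FreeFall)
    {k : ℕ} (hk : k ∈ Icc 1 π.K) (ha : 2 ≤ π.a k) :
    π.Tsum k ≤ fallTime c R (π.α 1 * π.τ 1) (π.a k - 1) := by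
  obtain ⟨hk₁, hkK⟩ := mem_Icc.1 hk
  have hakn := (mem_Icc.1 (hπ.2.1 k hk).2.2).2
  have h := hπ.indiff_pred_le_avg hI hk ha
  rw [hff.avg_eq hk₁ hkK, le_div_iff₀ (hπ.Tsum_pos hk₁ hkK)] at h
  rw [fallTime, le_div_iff₀ (hI.indiff_pos (by omega) (by omega))]
  linarith

theorem Valid.Util_le_greedyUtil (hI : LinInstance n c R) (hπ : π.Valid n c R)
    (hff : π.FreeFall) :
    π.Util R ≤ greedyUtil c R (π.α 1 * π.τ 1) (π.a 1) (π.Tsum π.K) := by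
  have h₁ : 1 ∈ Icc 1 π.K := mem_Icc.2 ⟨le_rfl, hπ.1⟩
  have hA : 0 ≤ π.α 1 * π.τ 1 := mul_nonneg (hπ.2.1 1 h₁).1 (hπ.τ_pos h₁).le
  have hin := (mem_Icc.1 (hπ.2.1 1 h₁).2.2).2
  rw [hff.Util_eq hπ.1, greedyUtil]
  refine div_le_div_of_nonneg_right (sub_le_sub_right ?_ _) (hπ.Tsum_pos hπ.1 le_rfl).le
  exact sum_le_greedyReward (hI.R_strictMonoOn.monotoneOn.mono (Set.Icc_subset_Icc_right hin))
    (hI.fallTime_antitoneOn hA hin) (hI.fallTime_nonneg hA hin) fun k hk =>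
      ⟨(hπ.τ_pos hk).le, (mem_Icc.1 (hπ.2.1 k hk).2.2).1, hπ.a_le_a_one hI hff hk,
        hπ.Tsum_le_fallTime hI hff hk⟩

section Staircase

-- Segment `k` plays action `i + 1 - k` until the average contract has fallen to `α_{i-k,i-k+1}`.
noncomputable def staircase (c R : ℕ → ℝ) (A : ℝ) (i m : ℕ) : DLC where
  K := i - m + 1
  α k := if k = 1 then indiff c R (i - 1) else 0
  τ k := fallTime c R A (i - k) - if k = 1 then 0 else fallTime c R A (i - k + 1)
  a k := i + 1 - k

variable {A : ℝ} {m : ℕ}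

theorem staircase_freeFall : (staircase c R A i m).FreeFall := fun _ hk _ =>
  if_neg (by omega)

theorem staircase_Tsum {k : ℕ} (hk : 1 ≤ k) (hki : k ≤ i) :
    (staircase c R A i m).Tsum k = fallTime c R A (i - k) := by
  have htel := sum_Icc_sub_pred (fun j => if j = 0 then 0 else fallTime c R A (i - j)) k
  simp only [if_neg (show k ≠ 0 by omega), ↓reduceIte, sub_zero] at htel
  rw [← htel, Tsum]
  refine sum_congr rfl fun j hj => ?_
  obtain ⟨hj₁, hjk⟩ := mem_Icc.1 hj
  simp only [staircase, if_neg (show j ≠ 0 by omega)]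
  rcases eq_or_lt_of_le hj₁ with rfl | hj₂
  · simp
  · rw [if_neg (by omega), if_neg (by omega), show i - (j - 1) = i - j + 1 by omega]

theorem staircase_α_one_mul_τ_one (hI : LinInstance n c R) (hi : 2 ≤ i) (hin : i ≤ n) :
    (staircase c R A i m).α 1 * (staircase c R A i m).τ 1 = A := by
  simp only [staircase, ↓reduceIte, sub_zero, fallTime]
  exact mul_div_cancel₀ A (hI.indiff_pos (by omega) (by omega)).ne'

variable (hI : LinInstance n c R) (hA : 0 < A) (hm : 2 ≤ m) (hmi : m ≤ i) (hin : i ≤ n)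
include hI hA hm hmi hin

theorem staircase_avg {k : ℕ} (hk : 1 ≤ k) (hkK : k ≤ i - m + 1) :
    (staircase c R A i m).avg k = indiff c R (i - k) := by
  rw [avg, staircase_freeFall.Asum_eq hk hkK, staircase_α_one_mul_τ_one hI (by omega) hin,
    staircase_Tsum hk (by omega), fallTime, div_div_cancel₀ hA.ne']

theorem staircase_valid : (staircase c R A i m).Valid n c R := by
  refine ⟨Nat.le_add_left 1 (i - m), fun k hk => ?_, fun k hk => ?_, fun k hk₂ hkK => ?_⟩
  · obtain ⟨hk₁, hkK⟩ := mem_Icc.1 hk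
    change k ≤ i - m + 1 at hkK
    refine ⟨?_, ?_, mem_Icc.2 ⟨by simp only [staircase]; omega, by simp only [staircase]; omega⟩⟩
    · simp only [staircase]
      split_ifs
      exacts [(hI.indiff_pos (by omega) (by omega)).le, le_rfl]
    · rw [← Tsum_sub_Tsum_pred _ hk₁, sub_pos, staircase_Tsum hk₁ (by omega)]
      obtain rfl | hk₂ := eq_or_lt_of_le hk₁
      · exact Tsum_zero _ ▸ hI.fallTime_pos hA (by omega) (by omega)
      rw [staircase_Tsum (by omega) (by omega), show i - (k - 1) = i - k + 1 by omega]
      exact div_lt_div_of_pos_left hA (hI.indiff_pos (by omega) (by omega))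
        (hI.indiff_strictMonoOn ⟨by omega, by omega⟩ ⟨by omega, by omega⟩ (by omega))
  · obtain ⟨hk₁, hkK⟩ := mem_Icc.1 hk
    change k ≤ i - m + 1 at hkK
    rw [staircase_avg hI hA hm hmi hin hk₁ hkK]
    convert (hI.mem_BR_indiff (l := i - k) (by omega) (by omega)).2 using 1
    show i + 1 - k = i - k + 1
    omega
  · change k ≤ i - m + 1 at hkK
    rw [staircase_avg hI hA hm hmi hin (by omega) (by omega),
      show i - (k - 1) = i + 1 - k by omega]
    exact (hI.mem_BR_indiff (by omega) (by omega)).1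

theorem staircase_Util :
    (staircase c R A i m).Util R = greedyUtil c R A i (fallTime c R A (m - 1)) := by
  have hK : (staircase c R A i m).K = i - m + 1 := rfl
  have hTK : (staircase c R A i m).Tsum (staircase c R A i m).K = fallTime c R A (m - 1) := by
    rw [hK, staircase_Tsum (by omega) (by omega), show i - (i - m + 1) = m - 1 by omega]
  have hsum : ∑ k ∈ Icc 1 (staircase c R A i m).K,
      (staircase c R A i m).τ k * R ((staircase c R A i m).a k) =
        greedyReward R (fallTime c R A) i (fallTime c R A (m - 1)) := by
    rw [← hTK]
    refine sum_eq_greedyReward (hI.fallTime_antitoneOn hA.le hin) (hI.fallTime_nonneg hA.le hin)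
      fun k hk => ?_
    obtain ⟨hk₁, hkK⟩ := mem_Icc.1 hk
    change k ≤ i - m + 1 at hkK
    refine ⟨((staircase_valid hI hA hm hmi hin).τ_pos hk).le, ?_, ?_, fun _ => ?_, fun hai => ?_⟩
    · show 1 ≤ i + 1 - k
      omega
    · show i + 1 - k ≤ i
      omega
    · rw [staircase_Tsum hk₁ (by omega)]
      exact le_of_eq (congrArg _ (by show i - k = i + 1 - k - 1; omega))
    · change i + 1 - k < i at hai
      rw [staircase_Tsum (by omega) (by omega)]
      exact le_of_eq (congrArg _ (by show i + 1 - k = i - (k - 1); omega))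
  rw [staircase_freeFall.Util_eq (Nat.le_add_left 1 _), hsum,
    staircase_α_one_mul_τ_one hI (by omega) hin, hTK, greedyUtil]
  rfl

theorem staircase_startsAndEndsAtIndiff : StartsAndEndsAtIndiff n c R (staircase c R A i m) := by
  refine ⟨i, by omega, hin, ?_, Nat.add_sub_cancel i 1, m, by omega, hmi, ?_⟩
  · rw [bp, if_neg (by omega)]
    rfl
  · change (staircase c R A i m).avg (i - m + 1) = _
    rw [staircase_avg hI hA hm hmi hin (by omega) le_rfl, bp, if_neg (by omega),
      show i - (i - m + 1) = m - 1 by omega]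

end Staircase

def zeroContract : DLC := ⟨1, fun _ => 0, fun _ => 1, fun _ => 1⟩

theorem zeroContract_freeFall : zeroContract.FreeFall := fun _ _ _ => rfl

theorem zeroContract_avg (k : ℕ) : zeroContract.avg k = 0 := by
  simp [avg, Asum, zeroContract]

theorem zeroContract_Util : zeroContract.Util R = R 1 := by
  simp [Util, Tsum, zeroContract]

theorem zeroContract_valid (hI : LinInstance n c R) : zeroContract.Valid n c R := by
  have hn := hI.1
  refine ⟨le_rfl, fun k hk => ?_, fun k _ => ?_, fun k hk₂ hkK => absurd hkK (by
    change ¬k ≤ 1; omega)⟩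
  · exact ⟨le_rfl, one_pos, mem_Icc.2 ⟨le_rfl, (by omega : 1 ≤ n)⟩⟩
  · rw [zeroContract_avg]
    exact hI.mem_BR (m := 1) le_rfl (by omega) (by omega)
      fun _ => (hI.indiff_pos le_rfl (by omega)).le

theorem zeroContract_startsAndEndsAtIndiff (hI : LinInstance n c R) :
    StartsAndEndsAtIndiff n c R zeroContract :=
  ⟨1, le_rfl, by have := hI.1; omega, rfl, rfl, 1, le_rfl, le_rfl, zeroContract_avg 1⟩

end DLC

open DLC in
theorem LinInstance.exists_startsAndEndsAtIndiff_greedyUtil_le {n : ℕ} {c R : ℕ → ℝ}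
    (hI : LinInstance n c R) {A T : ℝ} {i : ℕ} (hA : 0 ≤ A) (hAi : 2 ≤ i → 0 < A) (hi : 1 ≤ i)
    (hin : i ≤ n) (hT : 0 < T) :
    ∃ π' : DLC, π'.Valid n c R ∧ π'.FreeFall ∧ StartsAndEndsAtIndiff n c R π' ∧
      greedyUtil c R A i T ≤ π'.Util R := by
  have hs := hI.fallTime_antitoneOn hA hin
  obtain ⟨a, ha, hai, hup, hlo⟩ := exists_index_bracketing (fallTime c R A) T hi
  have hloT : a < i → fallTime c R A a ≤ T := fun h => (hlo h).le
  set D := greedyReward R (fallTime c R A) i T - A * R i - R a * T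
  by_cases hD : D ≤ 0
  · obtain rfl | ha₂ := eq_or_lt_of_le ha
    · refine ⟨zeroContract, zeroContract_valid hI, zeroContract_freeFall,
        zeroContract_startsAndEndsAtIndiff hI, ?_⟩
      rw [zeroContract_Util, greedyUtil, div_le_iff₀ hT]
      linarith
    have hA' := hAi (by omega)
    refine ⟨staircase c R A i a, staircase_valid hI hA' ha₂ hai hin, staircase_freeFall,
      staircase_startsAndEndsAtIndiff hI hA' ha₂ hai hin, ?_⟩
    rw [staircase_Util hI hA' ha₂ hai hin]
    exact greedyUtil_le_greedyUtil hs ha hai (hI.fallTime_pos hA' (by omega) (by omega)) hT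
      (fun _ => le_rfl) (fun _ => hs ⟨by omega, by omega⟩ ⟨by omega, by omega⟩ (by omega)) hup hloT
      (mul_nonneg_of_nonpos_of_nonpos hD (by linarith [hup ha₂]))
  · have hai' : a < i := by
      refine lt_of_le_of_ne hai fun hai => hD ?_
      subst hai
      -- on the last piece `greedyReward` is `R i * t`, so `D = - A * R i`
      have h₀ := greedyReward_sub_mul_eq (R := R) hs ha le_rfl
        (fun _ => hI.fallTime_nonneg hA hin _ (mem_Ico.2 ⟨by omega, by omega⟩))
        (fun h => absurd h (lt_irrefl _)) hup hloT
      rw [greedyReward_zero (hI.fallTime_nonneg hA hin)] at h₀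
      nlinarith [hI.R_nonneg hi hin]
    have hA' := hAi (by omega)
    have ha₂ : 2 ≤ a + 1 := by omega
    refine ⟨staircase c R A i (a + 1), staircase_valid hI hA' ha₂ hai' hin,
      staircase_freeFall, staircase_startsAndEndsAtIndiff hI hA' ha₂ hai' hin, ?_⟩
    rw [staircase_Util hI hA' ha₂ hai' hin, Nat.add_sub_cancel]
    exact greedyUtil_le_greedyUtil hs ha hai (hI.fallTime_pos hA' ha (by omega)) hT
      (fun _ => hs ⟨by omega, by omega⟩ ⟨ha, hai'⟩ (by omega)) (fun _ => le_rfl) hup hloT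
      (mul_nonneg (not_le.1 hD).le (by linarith [hlo hai']))

/-- Every valid free-fall dynamic linear contract is dominated
by a valid free-fall contract that starts at an indifference point
(`α'^1 = α_{i-1,i}`, `a'^1 = i`) and whose final time-averaged contract ends at
an indifference point `α_{j-1,j}` with `j ≤ i` (where `α_{0,1} := 0`). -/
theorem free_fall_endpoints_at_indifference (n : ℕ) (c R : ℕ → ℝ)
    (hInst : LinInstance n c R) (π : DLC) (hπ : π.Valid n c R) (hff : π.FreeFall) :
    ∃ π' : DLC, π'.Valid n c R ∧ π'.FreeFall ∧ π'.Util R ≥ π.Util R ∧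
      ∃ i, 1 ≤ i ∧ i ≤ n ∧ π'.α 1 = bp c R (i - 1) ∧ π'.a 1 = i ∧
        ∃ j, 1 ≤ j ∧ j ≤ i ∧ π'.avg π'.K = bp c R (j - 1) := by
  have h₁ : 1 ∈ Icc 1 π.K := mem_Icc.2 ⟨le_rfl, hπ.1⟩
  obtain ⟨hα, hτ, ha⟩ := hπ.2.1 1 h₁
  obtain ⟨ha₁, han⟩ := mem_Icc.1 ha
  have hAi : 2 ≤ π.a 1 → 0 < π.α 1 * π.τ 1 := fun h₂ => by
    have := hπ.indiff_pred_le_avg hInst h₁ h₂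
    rw [hff.avg_eq le_rfl hπ.1] at this
    exact (div_pos_iff_of_pos_right (hπ.Tsum_pos le_rfl hπ.1)).1
      ((hInst.indiff_pos (by omega) (by omega)).trans_le this)
  obtain ⟨π', hv, hff', hends, hle⟩ := hInst.exists_startsAndEndsAtIndiff_greedyUtil_le
    (mul_nonneg hα hτ.le) hAi ha₁ han (hπ.Tsum_pos hπ.1 le_rfl)
  exact ⟨π', hv, hff', (hπ.Util_le_greedyUtil hInst hff).trans hle, hends⟩
end
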